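/- Comparison lemma for terminal-point increments: for x ≤ y in ℤ², (a) if x − e1 is admissible then Î_{x,y} ≥ Î_{x−e1,y} and Ĵ_{x,y} ≤ Ĵ_{x−e1,y}; (b) if x − e2 is admissible then Î_{x,y} ≤ Î_{x−e2,y} and Ĵ_{x,y} ≥ Ĵ_{x−e2,y}, where Î_{x,y} = L_{x,y} − L_{x,y−e1} and Ĵ_{x,y} = L_{x,y} − L_{x,y−e2}. -/

import Mathlib

open scoped BigOperators

/-- An up-right path of length `n` in `ℤ²`: each step is `e1 = (1,0)` or `e2 = (0,1)`. -/
def IsUpRight (n : ℕ) (π : ℕ → ℤ × ℤ) : Prop :=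
  ∀ i < n, π (i + 1) = π i + (1, 0) ∨ π (i + 1) = π i + (0, 1)

/-- The last-passage time `L_{x,y}(w)`: the supremum (a maximum over the finitely many
up-right paths from `x` to `y`, including both endpoints) of the path weight sums,
with value `⊥ = -∞` when `x ≤ y` fails (empty set of paths). -/
noncomputable def lpp (w : ℤ × ℤ → ℝ) (x y : ℤ × ℤ) : EReal :=
  sSup {s : EReal | ∃ n : ℕ, ∃ π : ℕ → ℤ × ℤ,
    π 0 = x ∧ π n = y ∧ IsUpRight n π ∧
    s = ((∑ i ∈ Finset.range (n + 1), w (π i) : ℝ) : EReal)}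

/-- Increment with respect to the initial point: `I_{x,y} = L_{x,y} - L_{x+e1,y}`. -/
noncomputable def incI (w : ℤ × ℤ → ℝ) (x y : ℤ × ℤ) : EReal :=
  lpp w x y - lpp w (x + (1, 0)) y

/-- Increment with respect to the initial point: `J_{x,y} = L_{x,y} - L_{x+e2,y}`. -/
noncomputable def incJ (w : ℤ × ℤ → ℝ) (x y : ℤ × ℤ) : EReal :=
  lpp w x y - lpp w (x + (0, 1)) y

/-- Increment with respect to the terminal point: `Î_{x,y} = L_{x,y} - L_{x,y-e1}`. -/
noncomputable def incIhat (w : ℤ × ℤ → ℝ) (x y : ℤ × ℤ) : EReal :=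
  lpp w x y - lpp w x (y - (1, 0))

/-- Increment with respect to the terminal point: `Ĵ_{x,y} = L_{x,y} - L_{x,y-e2}`. -/
noncomputable def incJhat (w : ℤ × ℤ → ℝ) (x y : ℤ × ℤ) : EReal :=
  lpp w x y - lpp w x (y - (0, 1))

/-! The comparison inequalities are differences of the crossing inequality
`L(a, b) + L(c, d) ≤ L(a, d) + L(c, b)`, which holds whenever every up-right path from `a` to `b`
meets every up-right path from `c` to `d`: exchanging the tails of two geodesics at a common
point produces a path from `a` to `d` and one from `c` to `b` with the same total weight.
For part (a) the pairs are `(x - e1 → y, x → y - e1)` for `Î` and `(x - e1 → y - e2, x → y)` for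
`Ĵ`; they must meet because, on each common antidiagonal, the first coordinate of one path minus
that of the other starts `≤ 0`, ends `≥ 0`, and moves by at most one per step. Where the
geodesics do not exist the last-passage times are `⊥` and the inequalities hold in `EReal` for
trivial reasons. Part (b) is part (a) for the transposed weights `w ∘ Prod.swap`. -/

lemma EReal.sub_le_sub_of_add_le_add {p q r s : EReal} (hq_bot : q ≠ ⊥) (hq_top : q ≠ ⊤)
    (hs_bot : s ≠ ⊥) (hs_top : s ≠ ⊤) (h : p + s ≤ q + r) : p - q ≤ r - s := by
  rw [EReal.sub_le_iff_le_add (.inl hq_bot) (.inl hq_top), sub_eq_add_neg, add_right_comm,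
    ← sub_eq_add_neg, EReal.le_sub_iff_add_le (.inl hs_bot) (.inl hs_top), add_comm r]
  exact h

lemma exists_eq_of_forall_le_add_one {f : ℕ → ℤ} {k : ℕ} {a : ℤ}
    (hstep : ∀ t < k, f (t + 1) ≤ f t + 1) (h0 : f 0 ≤ a) (hk : a ≤ f k) :
    ∃ t ≤ k, f t = a := by
  induction k with
  | zero => exact ⟨0, le_rfl, le_antisymm h0 hk⟩
  | succ k ih =>
    by_cases h : a ≤ f k
    · obtain ⟨t, ht, hft⟩ := ih (fun t ht => hstep t (by omega)) h
      exact ⟨t, by omega, hft⟩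
    · exact ⟨k + 1, le_rfl, by have := hstep k (by omega); omega⟩

def pathWeight (w : ℤ × ℤ → ℝ) (n : ℕ) (π : ℕ → ℤ × ℤ) : ℝ :=
  ∑ i ∈ Finset.range (n + 1), w (π i)

def pathWeights (w : ℤ × ℤ → ℝ) (x y : ℤ × ℤ) : Set EReal :=
  {s | ∃ n π, π 0 = x ∧ π n = y ∧ IsUpRight n π ∧ s = pathWeight w n π}

lemma lpp_eq_sSup_pathWeights (w : ℤ × ℤ → ℝ) (x y : ℤ × ℤ) :
    lpp w x y = sSup (pathWeights w x y) :=
  rfl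

namespace IsUpRight

variable {n : ℕ} {π : ℕ → ℤ × ℤ}

lemma step (h : IsUpRight n π) {i : ℕ} (hi : i < n) :
    ((π (i + 1)).1 = (π i).1 + 1 ∧ (π (i + 1)).2 = (π i).2) ∨
    ((π (i + 1)).1 = (π i).1 ∧ (π (i + 1)).2 = (π i).2 + 1) := by
  rcases h i hi with h' | h' <;> simp [h']

lemma level (h : IsUpRight n π) {i : ℕ} (hi : i ≤ n) :
    (π i).1 + (π i).2 = (π 0).1 + (π 0).2 + i := by
  induction i with
  | zero => simp
  | succ k ih =>
    have := ih (by omega)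
    rcases h.step (i := k) (by omega) with ⟨h1, h2⟩ | ⟨h1, h2⟩ <;> omega

lemma monotoneOn (h : IsUpRight n π) : MonotoneOn π (Set.Iic n) :=
  monotoneOn_of_le_succ Set.ordConnected_Iic fun i _ _ hi => by
    rcases h.step (i := i) (by simp_all) with ⟨h1, h2⟩ | ⟨h1, h2⟩ <;>
      exact Prod.mk_le_mk.mpr ⟨by simp; omega, by simp; omega⟩

end IsUpRight

lemma exists_isUpRight {x y : ℤ × ℤ} (h : x ≤ y) :
    ∃ n π, π 0 = x ∧ π n = y ∧ IsUpRight n π := by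
  obtain ⟨a, ha⟩ : ∃ a : ℕ, y.1 = x.1 + a := ⟨(y.1 - x.1).toNat, by have := h.1; omega⟩
  obtain ⟨b, hb⟩ : ∃ b : ℕ, y.2 = x.2 + b := ⟨(y.2 - x.2).toNat, by have := h.2; omega⟩
  -- with truncated subtraction `i - a`: first `a` steps right, then `b` steps up
  refine ⟨a + b, fun i => (x.1 + (min i a : ℕ), x.2 + (i - a : ℕ)), by simp, ?_, ?_⟩
  · ext <;> simp <;> omega
  · intro i _
    by_cases hi : i < a
    · left; ext <;> simp <;> omega
    · right; ext <;> simp <;> omega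

section LastPassage

variable (w : ℤ × ℤ → ℝ) {x y : ℤ × ℤ}

lemma le_lpp {n : ℕ} {π : ℕ → ℤ × ℤ} (h0 : π 0 = x) (hn : π n = y) (hπ : IsUpRight n π) :
    (pathWeight w n π : EReal) ≤ lpp w x y :=
  le_sSup (s := pathWeights w x y) ⟨n, π, h0, hn, hπ, rfl⟩

lemma lpp_eq_bot (h : ¬ x ≤ y) : lpp w x y = ⊥ := by
  refine (sSup_eq_bot (s := pathWeights w x y)).mpr ?_
  rintro s ⟨n, π, rfl, rfl, hπ, rfl⟩
  exact absurd (hπ.monotoneOn (by simp) (by simp) (Nat.zero_le n)) h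

/-- Paths from `x` to `y` have `ℓ(y) - ℓ(x)` steps and stay in the box `[x, y]`, so only
finitely many weights occur. -/
lemma finite_pathWeights (x y : ℤ × ℤ) : (pathWeights w x y).Finite := by
  generalize hd : (y.1 + y.2 - x.1 - x.2).toNat = d
  refine (Set.finite_range fun f : Fin (d + 1) → Set.Icc x y =>
    ((∑ i, w (f i) : ℝ) : EReal)).subset ?_
  rintro s ⟨n, π, rfl, rfl, hπ, rfl⟩
  obtain rfl : n = d := by have := hπ.level le_rfl; omega
  refine ⟨fun i => ⟨π i, hπ.monotoneOn (by simp) (by simp [i.is_le]) (Nat.zero_le _),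
    hπ.monotoneOn (by simp [i.is_le]) (by simp) i.is_le⟩, ?_⟩
  simp [pathWeight, Finset.sum_range]

lemma exists_lpp_eq (h : x ≤ y) :
    ∃ n π, π 0 = x ∧ π n = y ∧ IsUpRight n π ∧ lpp w x y = pathWeight w n π := by
  obtain ⟨n, π, h0, hn, hπ⟩ := exists_isUpRight h
  obtain ⟨m, σ, h0, hn, hσ, hmax⟩ :=
    Set.Nonempty.csSup_mem (s := pathWeights w x y) ⟨_, n, π, h0, hn, hπ, rfl⟩
      (finite_pathWeights w x y)
  exact ⟨m, σ, h0, hn, hσ, hmax⟩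

lemma lpp_ne_bot (h : x ≤ y) : lpp w x y ≠ ⊥ := by
  obtain ⟨n, π, -, -, -, hmax⟩ := exists_lpp_eq w h
  simp [hmax]

lemma lpp_ne_top (x y : ℤ × ℤ) : lpp w x y ≠ ⊤ := by
  by_cases h : x ≤ y
  · obtain ⟨n, π, -, -, -, hmax⟩ := exists_lpp_eq w h
    simp [hmax]
  · simp [lpp_eq_bot w h]

def splice (π σ : ℕ → ℤ × ℤ) (i j : ℕ) : ℕ → ℤ × ℤ :=
  fun k => if k ≤ i then π k else σ (j + (k - i))

lemma isUpRight_splice {m n i j : ℕ} {π σ : ℕ → ℤ × ℤ} (hπ : IsUpRight m π)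
    (hσ : IsUpRight n σ) (hi : i ≤ m) (hj : j ≤ n) (hij : π i = σ j) :
    IsUpRight (i + (n - j)) (splice π σ i j) := by
  intro k hk
  rcases lt_trichotomy k i with hki | rfl | hik
  · simpa [splice, hki.le, Nat.succ_le_of_lt hki] using hπ k (by omega)
  · simpa [splice, hij] using hσ j (by omega)
  · simpa [splice, hik.not_ge, show ¬ k + 1 ≤ i by omega, show j + (k + 1 - i) = j + (k - i) + 1
      by omega] using hσ (j + (k - i)) (by omega)

lemma splice_last {n i j : ℕ} {π σ : ℕ → ℤ × ℤ} (hj : j ≤ n) (hij : π i = σ j) :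
    splice π σ i j (i + (n - j)) = σ n := by
  by_cases hjn : j = n
  · subst hjn
    simp [splice, hij]
  · simp [splice, show ¬ i + (n - j) ≤ i by omega, show j + (n - j) = n by omega]

lemma pathWeight_eq_add (w : ℤ × ℤ → ℝ) {n i : ℕ} (π : ℕ → ℤ × ℤ) (hi : i ≤ n) :
    pathWeight w n π = pathWeight w i π + ∑ t ∈ Finset.range (n - i), w (π (i + 1 + t)) := by
  rw [pathWeight, pathWeight, show n + 1 = i + 1 + (n - i) by omega, Finset.sum_range_add]

lemma pathWeight_splice (w : ℤ × ℤ → ℝ) (n i j : ℕ) (π σ : ℕ → ℤ × ℤ) :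
    pathWeight w (i + (n - j)) (splice π σ i j)
      = pathWeight w i π + ∑ t ∈ Finset.range (n - j), w (σ (j + 1 + t)) := by
  rw [pathWeight_eq_add w _ (Nat.le_add_right i (n - j)), Nat.add_sub_cancel_left]
  congr 1
  · refine Finset.sum_congr rfl fun k hk => ?_
    simp [splice, Nat.le_of_lt_succ (Finset.mem_range.mp hk)]
  · refine Finset.sum_congr rfl fun t _ => ?_
    simp [splice, show j + (i + 1 + t - i) = j + 1 + t by omega, show ¬ i + 1 + t ≤ i by omega]

/-- Exchange the tails of `π` and `σ` at their common point `π i = σ j`. -/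
lemma pathWeight_add_le_lpp_add_lpp {m n i j : ℕ} {π σ : ℕ → ℤ × ℤ}
    (hπ : IsUpRight m π) (hσ : IsUpRight n σ) (hi : i ≤ m) (hj : j ≤ n) (hij : π i = σ j) :
    ((pathWeight w m π + pathWeight w n σ : ℝ) : EReal)
      ≤ lpp w (π 0) (σ n) + lpp w (σ 0) (π m) := by
  have hsum : pathWeight w m π + pathWeight w n σ = pathWeight w (i + (n - j)) (splice π σ i j)
      + pathWeight w (j + (m - i)) (splice σ π j i) := by
    rw [pathWeight_splice w n i j π σ, pathWeight_splice w m j i σ π, pathWeight_eq_add w π hi,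
      pathWeight_eq_add w σ hj]
    ring
  rw [hsum, EReal.coe_add]
  exact add_le_add
    (le_lpp w (by simp [splice]) (splice_last hj hij) (isUpRight_splice hπ hσ hi hj hij))
    (le_lpp w (by simp [splice]) (splice_last hi hij.symm) (isUpRight_splice hσ hπ hj hi hij.symm))

end LastPassage

/-- On common antidiagonals the gap between the first coordinates of `π` and `σ` grows by at most
one per step, so it passes through zero. -/
lemma IsUpRight.exists_eq_of_fst_le {m n s k : ℕ} {π σ : ℕ → ℤ × ℤ}
    (hπ : IsUpRight m π) (hσ : IsUpRight n σ) (hsk : s + k ≤ m) (hk : k ≤ n)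
    (hlevel : (σ 0).1 + (σ 0).2 = (π s).1 + (π s).2)
    (hstart : (π s).1 ≤ (σ 0).1) (hend : (σ k).1 ≤ (π (s + k)).1) :
    ∃ i ≤ m, ∃ j ≤ n, π i = σ j := by
  obtain ⟨t, htk, ht⟩ := exists_eq_of_forall_le_add_one (f := fun t => (π (s + t)).1 - (σ t).1)
    (a := 0) (k := k) (fun t ht => by
      rcases hπ.step (i := s + t) (by omega) with ⟨h1, -⟩ | ⟨h1, -⟩ <;>
      rcases hσ.step (i := t) (by omega) with ⟨h2, -⟩ | ⟨h2, -⟩ <;>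
      simp only [← add_assoc, h1, h2] <;> omega) (by simpa using hstart) (by simpa using hend)
  have := hπ.level (i := s + t) (by omega)
  have := hπ.level (i := s) (by omega)
  have := hσ.level (i := t) (by omega)
  exact ⟨s + t, by omega, t, by omega, Prod.ext (by omega) (by omega)⟩

def PathsCross (a b c d : ℤ × ℤ) : Prop :=
  ∀ m π n σ, π 0 = a → π m = b → IsUpRight m π → σ 0 = c → σ n = d → IsUpRight n σ →
    ∃ i ≤ m, ∃ j ≤ n, π i = σ j

lemma PathsCross.symm {a b c d : ℤ × ℤ} (h : PathsCross a b c d) : PathsCross c d a b := by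
  intro m π n σ hπ0 hπm hπ hσ0 hσn hσ
  obtain ⟨i, hi, j, hj, hij⟩ := h n σ m π hσ0 hσn hσ hπ0 hπm hπ
  exact ⟨j, hj, i, hi, hij.symm⟩

lemma pathsCross_sub_e1_sub_e1 (x y : ℤ × ℤ) : PathsCross (x - (1, 0)) y x (y - (1, 0)) := by
  intro m π n σ hπ0 hπm hπ hσ0 hσn hσ
  have hm := hπ.level le_rfl
  have hn := hσ.level le_rfl
  simp only [hπ0, hπm, hσ0, hσn, Prod.fst_sub, Prod.snd_sub] at hm hn
  -- `σ` sits on the antidiagonals of `π 1, …, π (m - 1)`, starting weakly right of `π 1` and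
  -- ending weakly left of `π (m - 1)`
  have := hπ.level (i := 1) (by omega)
  have hfirst := hπ.step (i := 0) (by omega)
  have hlast := hπ.step (i := 1 + n) (by omega)
  rw [show 1 + n + 1 = m by omega] at hlast
  refine hπ.exists_eq_of_fst_le hσ (s := 1) (k := n) (by omega) le_rfl ?_ ?_ ?_ <;>
    simp_all <;> omega

lemma pathsCross_sub_e1_sub_e2 (x y : ℤ × ℤ) : PathsCross (x - (1, 0)) (y - (0, 1)) x y := by
  intro m π n σ hπ0 hπm hπ hσ0 hσn hσ
  have hm := hπ.level le_rfl
  have hn := hσ.level le_rfl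
  simp only [hπ0, hπm, hσ0, hσn, Prod.fst_sub, Prod.snd_sub] at hm hn
  have hπmono : π 0 ≤ π m := hπ.monotoneOn (by simp) (by simp) (Nat.zero_le m)
  have hσmono : σ 0 ≤ σ n := hσ.monotoneOn (by simp) (by simp) (Nat.zero_le n)
  simp only [hπ0, hπm, hσ0, hσn, Prod.le_def, Prod.fst_sub, Prod.snd_sub] at hπmono hσmono
  -- `σ 0, …, σ (n - 1)` sit on the antidiagonals of `π 1, …, π m`, starting weakly right of
  -- `π 1` and ending weakly left of `π m`
  have := hπ.level (i := 1) (by omega)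
  have hfirst := hπ.step (i := 0) (by omega)
  have hlast := hσ.step (i := n - 1) (by omega)
  rw [show n - 1 + 1 = n by omega] at hlast
  refine hπ.exists_eq_of_fst_le hσ (s := 1) (k := n - 1) (by omega) (by omega) ?_ ?_ ?_ <;>
    simp_all [show 1 + (n - 1) = m by omega] <;> omega

section Increments

variable (w : ℤ × ℤ → ℝ) {a b c d : ℤ × ℤ}

lemma lpp_add_lpp_le_of_pathsCross (hab : a ≤ b) (hcd : c ≤ d) (h : PathsCross a b c d) :
    lpp w a b + lpp w c d ≤ lpp w a d + lpp w c b := by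
  obtain ⟨m, π, hπ0, hπm, hπ, hab⟩ := exists_lpp_eq w hab
  obtain ⟨n, σ, hσ0, hσn, hσ, hcd⟩ := exists_lpp_eq w hcd
  obtain ⟨i, hi, j, hj, hij⟩ := h m π n σ hπ0 hπm hπ hσ0 hσn hσ
  rw [hab, hcd, ← EReal.coe_add, ← hπ0, ← hπm, ← hσ0, ← hσn]
  exact pathWeight_add_le_lpp_add_lpp w hπ hσ hi hj hij

lemma lpp_sub_lpp_le_of_pathsCross (had : a ≤ d) (hcb : c ≤ b) (h : PathsCross a b c d) :
    lpp w a b - lpp w a d ≤ lpp w c b - lpp w c d := by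
  by_cases hab : a ≤ b
  swap
  · simp [lpp_eq_bot w hab, EReal.bot_sub]
  by_cases hcd : c ≤ d
  swap
  · simp [lpp_eq_bot w hcd, EReal.sub_bot (lpp_ne_bot w hcb)]
  exact EReal.sub_le_sub_of_add_le_add (lpp_ne_bot w had) (lpp_ne_top w a d) (lpp_ne_bot w hcd)
    (lpp_ne_top w c d) (lpp_add_lpp_le_of_pathsCross w hab hcd h)

lemma incIhat_sub_e1_le {x y : ℤ × ℤ} (hxy : x ≤ y) :
    incIhat w (x - (1, 0)) y ≤ incIhat w x y :=
  lpp_sub_lpp_le_of_pathsCross w (by simpa using hxy) hxy (pathsCross_sub_e1_sub_e1 x y)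

lemma incJhat_le_incJhat_sub_e1 (x y : ℤ × ℤ) : incJhat w x y ≤ incJhat w (x - (1, 0)) y := by
  by_cases hxy : x ≤ y
  swap
  · simp [incJhat, lpp_eq_bot w hxy, EReal.bot_sub]
  by_cases hxy' : x ≤ y - (0, 1)
  · refine lpp_sub_lpp_le_of_pathsCross w hxy' ?_ (pathsCross_sub_e1_sub_e2 x y).symm
    simp only [Prod.le_def, Prod.fst_sub, Prod.snd_sub] at hxy ⊢
    omega
  · have hbot : ¬ x - (1, 0) ≤ y - (0, 1) := by
      simp only [Prod.le_def, Prod.fst_sub, Prod.snd_sub] at hxy hxy' ⊢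
      omega
    have htop : x - (1, 0) ≤ y := by
      simp only [Prod.le_def, Prod.fst_sub, Prod.snd_sub] at hxy ⊢
      omega
    rw [incJhat, incJhat, lpp_eq_bot w hbot, EReal.sub_bot (lpp_ne_bot w htop)]
    exact le_top

end Increments

lemma IsUpRight.comp_swap {n : ℕ} {π : ℕ → ℤ × ℤ} (h : IsUpRight n π) :
    IsUpRight n (Prod.swap ∘ π) := fun i hi => by
  rcases h i hi with h' | h' <;> simp [h']

lemma lpp_comp_swap (w : ℤ × ℤ → ℝ) (x y : ℤ × ℤ) :
    lpp (w ∘ Prod.swap) x y = lpp w x.swap y.swap := by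
  rw [lpp_eq_sSup_pathWeights, lpp_eq_sSup_pathWeights]
  congr 1
  ext s
  constructor
  · rintro ⟨n, π, rfl, rfl, hπ, rfl⟩
    exact ⟨n, Prod.swap ∘ π, rfl, rfl, hπ.comp_swap, rfl⟩
  · rintro ⟨n, π, h0, hn, hπ, rfl⟩
    exact ⟨n, Prod.swap ∘ π, by simp [h0], by simp [hn], hπ.comp_swap,
      by simp [pathWeight]⟩

lemma incJhat_comp_swap (w : ℤ × ℤ → ℝ) (x y : ℤ × ℤ) :
    incJhat (w ∘ Prod.swap) x y = incIhat w x.swap y.swap := by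
  simp only [incJhat, incIhat, lpp_comp_swap]
  congr 2

lemma incIhat_comp_swap (w : ℤ × ℤ → ℝ) (x y : ℤ × ℤ) :
    incIhat (w ∘ Prod.swap) x y = incJhat w x.swap y.swap := by
  simp only [incJhat, incIhat, lpp_comp_swap]
  congr 2

/-- Comparison lemma for increments with respect to the terminal point:
for `x ≤ y`, moving the initial point by `−e1` decreases `Î` and increases `Ĵ`, and
moving it by `−e2` increases `Î` and decreases `Ĵ` (inequalities in the extended reals). -/
theorem stmt5 (w : ℤ × ℤ → ℝ) (x y : ℤ × ℤ) (hxy : x ≤ y) :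
    (incIhat w (x - (1, 0)) y ≤ incIhat w x y ∧ incJhat w x y ≤ incJhat w (x - (1, 0)) y) ∧
    (incIhat w x y ≤ incIhat w (x - (0, 1)) y ∧ incJhat w (x - (0, 1)) y ≤ incJhat w x y) := by
  have hswap : (x.swap - (1, 0)).swap = x - (0, 1) := by ext <;> simp
  refine ⟨⟨incIhat_sub_e1_le w hxy, incJhat_le_incJhat_sub_e1 w x y⟩, ?_, ?_⟩
  · simpa [incJhat_comp_swap, hswap] using
      incJhat_le_incJhat_sub_e1 (w ∘ Prod.swap) x.swap y.swap
  · simpa [incIhat_comp_swap, hswap] using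
      incIhat_sub_e1_le (w ∘ Prod.swap) (Prod.swap_le_swap.mpr hxy)
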